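/- arXiv:2111.02596 — 4 statements merged into one kernel-verified Lean document; each statement's English description precedes it below -/
import Mathlib

section
/- Let A1, B1, C1, A2, B2, C2, E be random variables on a common finite discrete probability space, each taking values in a finite set. Then the conditional total correlation satisfies the chain rule: I((A1,A2);(B1,B2);(C1,C2)|E) = I(A1;B1;C1|(E,A2,B2,C2)) + I(A2;B2;C2|E) + I((A2,B2);C1|(E,C2)) + I((B2,C2);A1|(E,A2)) + I((A2,C2);B1|(E,B2)). -/
noncomputable def prob {Ω : Type*} [Fintype Ω] (μ : Ω → ℝ) (P : Ω → Prop) [DecidablePred P] : ℝ :=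
  ∑ ω ∈ Finset.univ.filter P, μ ω

/-- Shannon entropy (base 2) of a random variable `X` on a finite discrete
probability space with probability mass function `μ`. -/
noncomputable def entropy {Ω S : Type*} [Fintype Ω] [Fintype S] [DecidableEq S]
    (μ : Ω → ℝ) (X : Ω → S) : ℝ :=
  -∑ s : S, prob μ (fun ω => X ω = s) * Real.logb 2 (prob μ (fun ω => X ω = s))

/-- Conditional entropy `H(X|Y) = H(X,Y) - H(Y)`. -/
noncomputable def condEntropy {Ω S T : Type*} [Fintype Ω] [Fintype S] [DecidableEq S]
    [Fintype T] [DecidableEq T] (μ : Ω → ℝ) (X : Ω → S) (Y : Ω → T) : ℝ :=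
  entropy μ (fun ω => (X ω, Y ω)) - entropy μ Y

/-- Conditional mutual information `I(X;Y|Z) = H(X|Z) + H(Y|Z) - H(X,Y|Z)`. -/
noncomputable def condMutualInfo {Ω S T U : Type*} [Fintype Ω] [Fintype S] [DecidableEq S]
    [Fintype T] [DecidableEq T] [Fintype U] [DecidableEq U]
    (μ : Ω → ℝ) (X : Ω → S) (Y : Ω → T) (Z : Ω → U) : ℝ :=
  condEntropy μ X Z + condEntropy μ Y Z - condEntropy μ (fun ω => (X ω, Y ω)) Z

/-- Conditional total correlation of three random variables:
`I(A;B;C|E) = H(A|E) + H(B|E) + H(C|E) - H(A,B,C|E)`. -/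
noncomputable def condTotalCorr3 {Ω S T U V : Type*} [Fintype Ω] [Fintype S] [DecidableEq S]
    [Fintype T] [DecidableEq T] [Fintype U] [DecidableEq U] [Fintype V] [DecidableEq V]
    (μ : Ω → ℝ) (A : Ω → S) (B : Ω → T) (C : Ω → U) (E : Ω → V) : ℝ :=
  condEntropy μ A E + condEntropy μ B E + condEntropy μ C E -
    condEntropy μ (fun ω => (A ω, B ω, C ω)) E

/-- Conditional total correlation `I(A_1;⋯;A_M|E) = ∑ᵢ H(Aᵢ|E) - H(A_1,…,A_M|E)`. -/

lemma entropy_congr {Ω S T : Type*} [Fintype Ω] [Fintype S] [DecidableEq S]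
    [Fintype T] [DecidableEq T]
    (μ : Ω → ℝ) (X : Ω → S) (Y : Ω → T) (f : S → T) (hf : Function.Injective f)
    (h : ∀ ω, Y ω = f (X ω)) : entropy μ Y = entropy μ X := by
  unfold entropy
  congr 1
  rw [← Finset.sum_subset (Finset.subset_univ (Finset.univ.image f))]
  · rw [Finset.sum_image (fun a _ b _ hab => hf hab)]
    refine Finset.sum_congr rfl fun s _ => ?_
    have hp : prob μ (fun ω => Y ω = f s) = prob μ (fun ω => X ω = s) := by
      unfold prob
      refine Finset.sum_congr ?_ fun _ _ => rfl
      ext ω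
      simp [h, hf.eq_iff]
    rw [hp]
  · intro t _ ht
    have hp : prob μ (fun ω => Y ω = t) = 0 := by
      unfold prob
      have he : Finset.univ.filter (fun ω => Y ω = t) = ∅ := by
        ext ω
        simp only [Finset.mem_filter, Finset.mem_univ, true_and, Finset.notMem_empty, iff_false]
        intro hY
        exact ht (Finset.mem_image.mpr ⟨X ω, Finset.mem_univ _, by rw [← h, hY]⟩)
      rw [he, Finset.sum_empty]
    rw [hp]
    simp

noncomputable def condTotalCorr {Ω : Type*} [Fintype Ω] {M : ℕ} {S : Fin M → Type*}
    [∀ i, Fintype (S i)] [∀ i, DecidableEq (S i)] {T : Type*} [Fintype T] [DecidableEq T]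
    (μ : Ω → ℝ) (A : ∀ i, Ω → S i) (E : Ω → T) : ℝ :=
  (∑ i, condEntropy μ (A i) E) - condEntropy μ (fun ω i => A i ω) E

/-- Chain rule for the tripartite conditional total correlation (Theorem 2 of the paper):
`I(A₁A₂;B₁B₂;C₁C₂|E) = I(A₁;B₁;C₁|EA₂B₂C₂) + I(A₂;B₂;C₂|E)
  + I(A₂B₂;C₁|EC₂) + I(B₂C₂;A₁|EA₂) + I(A₂C₂;B₁|EB₂)`. -/
theorem tripartite_total_correlation_chain_rule
    {Ω SA1 SB1 SC1 SA2 SB2 SC2 SE : Type*} [Fintype Ω]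
    [Fintype SA1] [DecidableEq SA1] [Fintype SB1] [DecidableEq SB1]
    [Fintype SC1] [DecidableEq SC1] [Fintype SA2] [DecidableEq SA2]
    [Fintype SB2] [DecidableEq SB2] [Fintype SC2] [DecidableEq SC2]
    [Fintype SE] [DecidableEq SE]
    (μ : Ω → ℝ) (hμ : ∀ ω, 0 ≤ μ ω) (hμ1 : ∑ ω, μ ω = 1)
    (A1 : Ω → SA1) (B1 : Ω → SB1) (C1 : Ω → SC1)
    (A2 : Ω → SA2) (B2 : Ω → SB2) (C2 : Ω → SC2) (E : Ω → SE) :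
    condTotalCorr3 μ (fun ω => (A1 ω, A2 ω)) (fun ω => (B1 ω, B2 ω))
        (fun ω => (C1 ω, C2 ω)) E
      = condTotalCorr3 μ A1 B1 C1 (fun ω => (E ω, A2 ω, B2 ω, C2 ω))
        + condTotalCorr3 μ A2 B2 C2 E
        + condMutualInfo μ (fun ω => (A2 ω, B2 ω)) C1 (fun ω => (E ω, C2 ω))
        + condMutualInfo μ (fun ω => (B2 ω, C2 ω)) A1 (fun ω => (E ω, A2 ω))
        + condMutualInfo μ (fun ω => (A2 ω, C2 ω)) B1 (fun ω => (E ω, B2 ω)) := by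
  simp only [condTotalCorr3, condMutualInfo, condEntropy]
  have h1 : (entropy μ fun ω => ((A1 ω, A2 ω), E ω)) = entropy μ fun ω => (A1 ω, E ω, A2 ω) :=
    entropy_congr μ _ _ (fun p => ((p.1, p.2.2), p.2.1))
      (by rintro ⟨a, e, b⟩ ⟨a', e', b'⟩ h; simp_all) (fun ω => rfl)
  have h2 : (entropy μ fun ω => ((B1 ω, B2 ω), E ω)) = entropy μ fun ω => (B1 ω, E ω, B2 ω) :=
    entropy_congr μ _ _ (fun p => ((p.1, p.2.2), p.2.1))
      (by rintro ⟨a, e, b⟩ ⟨a', e', b'⟩ h; simp_all) (fun ω => rfl)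
  have h3 : (entropy μ fun ω => ((C1 ω, C2 ω), E ω)) = entropy μ fun ω => (C1 ω, E ω, C2 ω) :=
    entropy_congr μ _ _ (fun p => ((p.1, p.2.2), p.2.1))
      (by rintro ⟨a, e, b⟩ ⟨a', e', b'⟩ h; simp_all) (fun ω => rfl)
  have h4 : (entropy μ fun ω => (((A1 ω, A2 ω), (B1 ω, B2 ω), C1 ω, C2 ω), E ω))
      = entropy μ fun ω => ((A1 ω, B1 ω, C1 ω), E ω, A2 ω, B2 ω, C2 ω) :=
    entropy_congr μ _ _
      (fun p => (((p.1.1, p.2.2.1), (p.1.2.1, p.2.2.2.1), p.1.2.2, p.2.2.2.2), p.2.1))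
      (by rintro ⟨⟨a1, b1, c1⟩, e, a2, b2, c2⟩ ⟨⟨a1', b1', c1'⟩, e', a2', b2', c2'⟩ h; simp_all)
      (fun ω => rfl)
  have h5 : (entropy μ fun ω => ((A2 ω, B2 ω, C2 ω), E ω))
      = entropy μ fun ω => (E ω, A2 ω, B2 ω, C2 ω) :=
    entropy_congr μ _ _ (fun p => ((p.2.1, p.2.2.1, p.2.2.2), p.1))
      (by rintro ⟨e, a, b, c⟩ ⟨e', a', b', c'⟩ h; simp_all) (fun ω => rfl)
  have h6 : (entropy μ fun ω => ((A2 ω, B2 ω), E ω, C2 ω))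
      = entropy μ fun ω => (E ω, A2 ω, B2 ω, C2 ω) :=
    entropy_congr μ _ _ (fun p => ((p.2.1, p.2.2.1), p.1, p.2.2.2))
      (by rintro ⟨e, a, b, c⟩ ⟨e', a', b', c'⟩ h; simp_all) (fun ω => rfl)
  have h7 : (entropy μ fun ω => ((B2 ω, C2 ω), E ω, A2 ω))
      = entropy μ fun ω => (E ω, A2 ω, B2 ω, C2 ω) :=
    entropy_congr μ _ _ (fun p => ((p.2.2.1, p.2.2.2), p.1, p.2.1))
      (by rintro ⟨e, a, b, c⟩ ⟨e', a', b', c'⟩ h; simp_all) (fun ω => rfl)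
  have h8 : (entropy μ fun ω => ((A2 ω, C2 ω), E ω, B2 ω))
      = entropy μ fun ω => (E ω, A2 ω, B2 ω, C2 ω) :=
    entropy_congr μ _ _ (fun p => ((p.2.1, p.2.2.2), p.1, p.2.2.1))
      (by rintro ⟨e, a, b, c⟩ ⟨e', a', b', c'⟩ h; simp_all) (fun ω => rfl)
  have h9 : (entropy μ fun ω => (((A2 ω, B2 ω), C1 ω), E ω, C2 ω))
      = entropy μ fun ω => (C1 ω, E ω, A2 ω, B2 ω, C2 ω) :=
    entropy_congr μ _ _ (fun p => (((p.2.2.1, p.2.2.2.1), p.1), p.2.1, p.2.2.2.2))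
      (by rintro ⟨c1, e, a, b, c⟩ ⟨c1', e', a', b', c'⟩ h; simp_all) (fun ω => rfl)
  have h10 : (entropy μ fun ω => (((B2 ω, C2 ω), A1 ω), E ω, A2 ω))
      = entropy μ fun ω => (A1 ω, E ω, A2 ω, B2 ω, C2 ω) :=
    entropy_congr μ _ _ (fun p => (((p.2.2.2.1, p.2.2.2.2), p.1), p.2.1, p.2.2.1))
      (by rintro ⟨a1, e, a, b, c⟩ ⟨a1', e', a', b', c'⟩ h; simp_all) (fun ω => rfl)
  have h11 : (entropy μ fun ω => (((A2 ω, C2 ω), B1 ω), E ω, B2 ω))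
      = entropy μ fun ω => (B1 ω, E ω, A2 ω, B2 ω, C2 ω) :=
    entropy_congr μ _ _ (fun p => (((p.2.2.1, p.2.2.2.2), p.1), p.2.1, p.2.2.2.1))
      (by rintro ⟨b1, e, a, b, c⟩ ⟨b1', e', a', b', c'⟩ h; simp_all) (fun ω => rfl)
  have h12 : (entropy μ fun ω => (E ω, A2 ω)) = entropy μ fun ω => (A2 ω, E ω) :=
    entropy_congr μ _ _ (fun p => (p.2, p.1))
      (by rintro ⟨a, e⟩ ⟨a', e'⟩ h; simp_all) (fun ω => rfl)
  have h13 : (entropy μ fun ω => (E ω, B2 ω)) = entropy μ fun ω => (B2 ω, E ω) :=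
    entropy_congr μ _ _ (fun p => (p.2, p.1))
      (by rintro ⟨a, e⟩ ⟨a', e'⟩ h; simp_all) (fun ω => rfl)
  have h14 : (entropy μ fun ω => (E ω, C2 ω)) = entropy μ fun ω => (C2 ω, E ω) :=
    entropy_congr μ _ _ (fun p => (p.2, p.1))
      (by rintro ⟨a, e⟩ ⟨a', e'⟩ h; simp_all) (fun ω => rfl)
  rw [h1, h2, h3, h4, h5, h6, h7, h8, h9, h10, h11, h12, h13, h14]
  ring
end

section
/- Let M ≥ 1 and let A_{i,1}, A_{i,2} for i = 1,…,M and E be random variables on a common finite discrete probability space, each taking values in a finite set. Then I((A_{1,1},A_{1,2});(A_{2,1},A_{2,2});…;(A_{M,1},A_{M,2})|E) = I(A_{1,2};…;A_{M,2}|E) + I(A_{1,1};…;A_{M,1}|(E,A_{1,2},…,A_{M,2})) + Σ_{i=1}^M I((A_{j,2})_{j∈{1,…,M}, j≠i}; A_{i,1} | (E, A_{i,2})). -/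
lemma entropy_comp_inj {Ω S T : Type*} [Fintype Ω] [Fintype S] [DecidableEq S]
    [Fintype T] [DecidableEq T] (μ : Ω → ℝ) (X : Ω → S) (f : S → T)
    (hf : Function.Injective f) :
    entropy μ (fun ω => f (X ω)) = entropy μ X := by
  unfold entropy
  congr 1
  have hzero : ∀ t ∈ Finset.univ, t ∉ Finset.univ.image f →
      prob μ (fun ω => f (X ω) = t) * Real.logb 2 (prob μ (fun ω => f (X ω) = t)) = 0 := by
    intro t _ ht
    have : prob μ (fun ω => f (X ω) = t) = 0 := by
      unfold prob
      rw [Finset.filter_false_of_mem, Finset.sum_empty]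
      intro ω _ h
      exact ht (Finset.mem_image.mpr ⟨X ω, Finset.mem_univ _, h⟩)
    simp [this]
  rw [← Finset.sum_subset (Finset.subset_univ (Finset.univ.image f)) hzero,
    Finset.sum_image (fun a _ b _ h => hf h)]
  refine Finset.sum_congr rfl fun s _ => ?_
  have : prob μ (fun ω => f (X ω) = f s) = prob μ (fun ω => X ω = s) := by
    unfold prob
    congr 1
    ext ω
    simp [hf.eq_iff]
  rw [this]

lemma pi_eq_of_restrict {M : ℕ} {S2 : Fin M → Type*} (i : Fin M) {a b : ∀ j, S2 j}
    (h1 : (fun j : {j : Fin M // j ≠ i} => a (Subtype.val j)) = fun j => b (Subtype.val j)) (h2 : a i = b i) :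
    a = b := by
  funext j
  by_cases h : j = i
  · subst h; exact h2
  · exact congrFun h1 ⟨j, h⟩

/-- Chain rule for the multipartite conditional total correlation (Theorem 6 of the paper):
`I(A_{1,1}A_{1,2};…;A_{M,1}A_{M,2}|E) = I(A_{1,2};…;A_{M,2}|E)
  + I(A_{1,1};…;A_{M,1}|E A_{[M],2}) + ∑ᵢ I(A_{[M]∖{i},2}; A_{i,1} | E A_{i,2})`. -/
theorem multipartite_total_correlation_chain_rule
    {Ω : Type*} [Fintype Ω] {M : ℕ} (hM : 1 ≤ M)
    {S1 S2 : Fin M → Type*} [∀ i, Fintype (S1 i)] [∀ i, DecidableEq (S1 i)]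
    [∀ i, Fintype (S2 i)] [∀ i, DecidableEq (S2 i)]
    {SE : Type*} [Fintype SE] [DecidableEq SE]
    (μ : Ω → ℝ) (hμ : ∀ ω, 0 ≤ μ ω) (hμ1 : ∑ ω, μ ω = 1)
    (A1 : ∀ i, Ω → S1 i) (A2 : ∀ i, Ω → S2 i) (E : Ω → SE) :
    condTotalCorr μ (fun i ω => (A1 i ω, A2 i ω)) E
      = condTotalCorr μ A2 E
        + condTotalCorr μ A1 (fun ω => (E ω, fun i => A2 i ω))
        + ∑ i, condMutualInfo μ (fun ω => (fun j : {j : Fin M // j ≠ i} => A2 j.1 ω))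
            (A1 i) (fun ω => (E ω, A2 i ω)) := by
  -- canonical entropy forms
  have h1 : ∀ i, entropy μ (fun ω => ((A1 i ω, A2 i ω), E ω))
      = entropy μ (fun ω => (A1 i ω, A2 i ω, E ω)) := fun i =>
    entropy_comp_inj μ (fun ω => (A1 i ω, A2 i ω, E ω))
      (fun p => ((p.1, p.2.1), p.2.2))
      (fun p q h => by
        obtain ⟨a, b, c⟩ := p; obtain ⟨a', b', c'⟩ := q
        simp_all [Prod.ext_iff])
  have h10 : ∀ i, entropy μ (fun ω => (A1 i ω, E ω, A2 i ω))
      = entropy μ (fun ω => (A1 i ω, A2 i ω, E ω)) := fun i =>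
    entropy_comp_inj μ (fun ω => (A1 i ω, A2 i ω, E ω))
      (fun p => (p.1, p.2.2, p.2.1))
      (fun p q h => by
        obtain ⟨a, b, c⟩ := p; obtain ⟨a', b', c'⟩ := q
        simp_all [Prod.ext_iff])
  have h2 : entropy μ (fun ω => ((fun i => (A1 i ω, A2 i ω)), E ω))
      = entropy μ (fun ω => ((fun i => A1 i ω), (fun i => A2 i ω), E ω)) :=
    entropy_comp_inj μ (fun ω => ((fun i => A1 i ω), (fun i => A2 i ω), E ω))
      (fun p => ((fun i => (p.1 i, p.2.1 i)), p.2.2))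
      (fun p q h => by
        obtain ⟨a, b, c⟩ := p; obtain ⟨a', b', c'⟩ := q
        simp only [Prod.mk.injEq] at h ⊢
        refine ⟨funext fun i => ?_, funext fun i => ?_, h.2⟩
        · exact (Prod.mk.injEq _ _ _ _ ▸ congrFun h.1 i).1
        · exact (Prod.mk.injEq _ _ _ _ ▸ congrFun h.1 i).2)
  have h7 : entropy μ (fun ω => ((fun i => A1 i ω), E ω, (fun i => A2 i ω)))
      = entropy μ (fun ω => ((fun i => A1 i ω), (fun i => A2 i ω), E ω)) :=
    entropy_comp_inj μ (fun ω => ((fun i => A1 i ω), (fun i => A2 i ω), E ω))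
      (fun p => (p.1, p.2.2, p.2.1))
      (fun p q h => by
        obtain ⟨a, b, c⟩ := p; obtain ⟨a', b', c'⟩ := q
        simp_all [Prod.ext_iff])
  have h9 : ∀ i, entropy μ (fun ω => (E ω, A2 i ω))
      = entropy μ (fun ω => (A2 i ω, E ω)) := fun i =>
    entropy_comp_inj μ (fun ω => (A2 i ω, E ω)) (fun p => (p.2, p.1))
      (fun p q h => by
        obtain ⟨a, b⟩ := p; obtain ⟨a', b'⟩ := q; simp_all [Prod.ext_iff])
  have h6 : entropy μ (fun ω => (E ω, fun i => A2 i ω))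
      = entropy μ (fun ω => ((fun i => A2 i ω), E ω)) :=
    entropy_comp_inj μ (fun ω => ((fun i => A2 i ω), E ω)) (fun p => (p.2, p.1))
      (fun p q h => by
        obtain ⟨a, b⟩ := p; obtain ⟨a', b'⟩ := q; simp_all [Prod.ext_iff])
  have h8 : ∀ i, entropy μ (fun ω => ((fun j : {j : Fin M // j ≠ i} => A2 j.1 ω), E ω, A2 i ω))
      = entropy μ (fun ω => ((fun i => A2 i ω), E ω)) := fun i =>
    entropy_comp_inj μ (fun ω => ((fun i => A2 i ω), E ω))
      (fun p => ((fun j : {j : Fin M // j ≠ i} => p.1 j.1), p.2, p.1 i))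
      (fun p q h => by
        obtain ⟨a, b⟩ := p; obtain ⟨a', b'⟩ := q
        simp only [Prod.mk.injEq] at h ⊢
        exact ⟨pi_eq_of_restrict i h.1 h.2.2, h.2.1⟩)
  have h5 : ∀ i, entropy μ (fun ω => (A1 i ω, E ω, fun j => A2 j ω))
      = entropy μ (fun ω => (A1 i ω, (fun j => A2 j ω), E ω)) := fun i =>
    entropy_comp_inj μ (fun ω => (A1 i ω, (fun j => A2 j ω), E ω))
      (fun p => (p.1, p.2.2, p.2.1))
      (fun p q h => by
        obtain ⟨a, b, c⟩ := p; obtain ⟨a', b', c'⟩ := q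
        simp_all [Prod.ext_iff])
  have h11 : ∀ i, entropy μ
        (fun ω => (((fun j : {j : Fin M // j ≠ i} => A2 j.1 ω), A1 i ω), E ω, A2 i ω))
      = entropy μ (fun ω => (A1 i ω, (fun j => A2 j ω), E ω)) := fun i =>
    entropy_comp_inj μ (fun ω => (A1 i ω, (fun j => A2 j ω), E ω))
      (fun p => (((fun j : {j : Fin M // j ≠ i} => p.2.1 j.1), p.1), p.2.2, p.2.1 i))
      (fun p q h => by
        obtain ⟨a, b, c⟩ := p; obtain ⟨a', b', c'⟩ := q
        simp only [Prod.mk.injEq] at h ⊢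
        exact ⟨h.1.2, pi_eq_of_restrict i h.1.1 h.2.2, h.2.1⟩)
  simp only [condTotalCorr, condMutualInfo, condEntropy]
  simp only [h1, h10, h2, h7, h9, h6, h8, h5, h11]
  simp only [Finset.sum_sub_distrib, Finset.sum_add_distrib, Finset.sum_const,
    Finset.card_univ, Fintype.card_fin, nsmul_eq_mul]
  ring
end

section
/- Let A, B, C, X, Y, Z be nonempty finite sets, let p(a,b,c|x,y,z) be a conditional probability distribution over A × B × C given inputs in X × Y × Z, and let random variables (A,B,C,X,Y,Z) have the joint distribution μ(a,b,c,x,y,z) = q(x,y,z)·p(a,b,c|x,y,z), where q is the uniform distribution on X × Y × Z. Then the conditional mutual information I(X;(B,C)|(Y,Z)) equals 0 if and only if the no-signaling condition for the first party holds: Σ_a p(a,b,c|x,y,z) = Σ_a p(a,b,c|x̄,y,z) for all x, x̄ ∈ X and all b, c, y, z. -/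
section Aux

private lemma sumrot3 {α β γ : Type*} [Fintype α] [Fintype β] [Fintype γ] (f : α → β → γ → ℝ) :
    ∑ a, ∑ b, ∑ c, f a b c = ∑ b, ∑ c, ∑ a, f a b c := by
  rw [Finset.sum_comm]
  exact Finset.sum_congr rfl fun b _ => Finset.sum_comm

private lemma sumrot4 {α β γ δ : Type*} [Fintype α] [Fintype β] [Fintype γ] [Fintype δ]
    (f : α → β → γ → δ → ℝ) :
    ∑ a, ∑ b, ∑ c, ∑ d, f a b c d = ∑ b, ∑ c, ∑ d, ∑ a, f a b c d := by
  rw [Finset.sum_comm]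
  exact Finset.sum_congr rfl fun b _ => sumrot3 _

private lemma sumrot5 {α β γ δ ε : Type*} [Fintype α] [Fintype β] [Fintype γ] [Fintype δ]
    [Fintype ε] (f : α → β → γ → δ → ε → ℝ) :
    ∑ a, ∑ b, ∑ c, ∑ d, ∑ e, f a b c d e = ∑ b, ∑ c, ∑ d, ∑ e, ∑ a, f a b c d e := by
  rw [Finset.sum_comm]
  exact Finset.sum_congr rfl fun b _ => sumrot4 _

private lemma gibbs_term_nonneg (u v : ℝ) (hu : 0 ≤ u) (hv : 0 ≤ v) (hav : v = 0 → u = 0) :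
    0 ≤ u * Real.log (u / v) - (u - v) := by
  rcases eq_or_lt_of_le hu with h | h
  · simp [← h, hv]
  · have hv' : 0 < v := by
      rcases eq_or_lt_of_le hv with h' | h'
      · exact absurd (hav h'.symm) (ne_of_gt h)
      · exact h'
    have h1 : Real.log (v / u) ≤ v / u - 1 := Real.log_le_sub_one_of_pos (by positivity)
    have h2 : Real.log (u / v) = - Real.log (v / u) := by
      rw [← Real.log_inv]; congr 1; field_simp
    have h3 : u * Real.log (v / u) ≤ u * (v / u - 1) := mul_le_mul_of_nonneg_left h1 hu
    have h4 : u * (v / u) = v := mul_div_cancel₀ _ (ne_of_gt h)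
    rw [h2]
    nlinarith

private lemma gibbs_term_eq_iff (u v : ℝ) (hu : 0 ≤ u) (hv : 0 ≤ v) (hav : v = 0 → u = 0) :
    u * Real.log (u / v) - (u - v) = 0 ↔ u = v := by
  constructor
  · intro h
    rcases eq_or_lt_of_le hu with h0 | h0
    · simp [← h0] at h ⊢; linarith
    · have hv' : 0 < v := by
        rcases eq_or_lt_of_le hv with h' | h'
        · exact absurd (hav h'.symm) (ne_of_gt h0)
        · exact h'
      by_contra hne
      have hne' : v / u ≠ 1 := by
        intro hh
        apply hne
        field_simp at hh
        linarith
      have h1 : Real.log (v / u) < v / u - 1 :=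
        Real.log_lt_sub_one_of_pos (by positivity) hne'
      have h2 : Real.log (u / v) = - Real.log (v / u) := by
        rw [← Real.log_inv]; congr 1; field_simp
      rw [h2] at h
      have := mul_lt_mul_of_pos_left h1 h0
      rw [mul_sub, mul_div_cancel₀ _ (ne_of_gt h0)] at this
      nlinarith
  · intro h
    subst h
    rcases eq_or_lt_of_le hu with h0 | h0
    · simp [← h0]
    · rw [div_self (ne_of_gt h0), Real.log_one]; ring

private lemma gibbs {ι : Type*} [Fintype ι] (u v : ι → ℝ) (hu : ∀ i, 0 ≤ u i)
    (hv : ∀ i, 0 ≤ v i)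
    (hav : ∀ i, v i = 0 → u i = 0) (hsum : ∑ i, u i = ∑ i, v i) :
    (∑ i, u i * Real.logb 2 (u i / v i) = 0 ↔ ∀ i, u i = v i) := by
  have hlog2 : (0:ℝ) < Real.log 2 := Real.log_pos one_lt_two
  have key : ∑ i, u i * Real.logb 2 (u i / v i)
      = (∑ i, (u i * Real.log (u i / v i) - (u i - v i))) / Real.log 2 := by
    rw [Finset.sum_sub_distrib, Finset.sum_sub_distrib, hsum, sub_self, sub_zero,
      Finset.sum_div]
    refine Finset.sum_congr rfl fun i _ => ?_
    rw [Real.logb, div_eq_mul_inv, div_eq_mul_inv]; ring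
  have hnn : ∀ i ∈ Finset.univ, 0 ≤ u i * Real.log (u i / v i) - (u i - v i) :=
    fun i _ => gibbs_term_nonneg _ _ (hu i) (hv i) (hav i)
  rw [key, div_eq_zero_iff]
  constructor
  · intro h
    rcases h with h | h
    · have := (Finset.sum_eq_zero_iff_of_nonneg hnn).1 h
      intro i
      exact (gibbs_term_eq_iff _ _ (hu i) (hv i) (hav i)).1 (this i (Finset.mem_univ i))
    · exact absurd h (ne_of_gt hlog2)
  · intro h
    left
    apply Finset.sum_eq_zero
    intro i _
    exact (gibbs_term_eq_iff _ _ (hu i) (hv i) (hav i)).2 (h i)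

end Aux

/-- Information-theoretic characterization of no-signaling: with inputs chosen uniformly at
random, `I(X;BC|YZ) = 0` holds if and only if the no-signaling condition for the first
party holds. -/
theorem cmi_zero_iff_no_signaling
    {A B C X Y Z : Type*}
    [Fintype A] [DecidableEq A] [Nonempty A]
    [Fintype B] [DecidableEq B] [Nonempty B]
    [Fintype C] [DecidableEq C] [Nonempty C]
    [Fintype X] [DecidableEq X] [Nonempty X]
    [Fintype Y] [DecidableEq Y] [Nonempty Y]
    [Fintype Z] [DecidableEq Z] [Nonempty Z]
    (p : A → B → C → X → Y → Z → ℝ)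
    (hnn : ∀ a b c x y z, 0 ≤ p a b c x y z)
    (hnorm : ∀ x y z, ∑ a, ∑ b, ∑ c, p a b c x y z = 1)
    -- the joint distribution μ(a,b,c,x,y,z) = q(x,y,z) p(a,b,c|x,y,z) with q uniform
    (μ : A × B × C × X × Y × Z → ℝ)
    (hμ : ∀ a b c x y z, μ (a, b, c, x, y, z)
      = ((Fintype.card X : ℝ) * (Fintype.card Y : ℝ) * (Fintype.card Z : ℝ))⁻¹
          * p a b c x y z) :
    condMutualInfo μ
        (fun ω => ω.2.2.2.1)                    -- X
        (fun ω => (ω.2.1, ω.2.2.1))             -- (B, C)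
        (fun ω => (ω.2.2.2.2.1, ω.2.2.2.2.2))   -- (Y, Z)
      = 0
    ↔ ∀ x x' b c y z, ∑ a, p a b c x y z = ∑ a, p a b c x' y z := by
  obtain ⟨w, hw_def⟩ : ∃ w : ℝ,
      w = ((Fintype.card X : ℝ) * (Fintype.card Y : ℝ) * (Fintype.card Z : ℝ))⁻¹ := ⟨_, rfl⟩
  simp_rw [← hw_def] at hμ
  have hXpos : (0:ℝ) < (Fintype.card X : ℝ) := by exact_mod_cast Fintype.card_pos
  have hYpos : (0:ℝ) < (Fintype.card Y : ℝ) := by exact_mod_cast Fintype.card_pos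
  have hZpos : (0:ℝ) < (Fintype.card Z : ℝ) := by exact_mod_cast Fintype.card_pos
  have hwpos : (0:ℝ) < w := by rw [hw_def]; positivity
  have hcard1 : (Fintype.card X : ℝ) * (Fintype.card Y : ℝ) * (Fintype.card Z : ℝ) * w = 1 := by
    rw [hw_def]; exact mul_inv_cancel₀ (by positivity)
  -- marginal probabilities
  have P1 : ∀ s : X × Y × Z,
      prob μ (fun ω : A × B × C × X × Y × Z => (ω.2.2.2.1, (ω.2.2.2.2.1, ω.2.2.2.2.2)) = s)
        = w := by
    rintro ⟨x0, y0, z0⟩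
    rw [prob, Finset.sum_filter]
    simp [Fintype.sum_prod_type, Prod.mk.injEq, hμ, ite_and]
    simp_rw [← Finset.mul_sum]
    rw [hnorm x0 y0 z0, mul_one]
  have P2 : ∀ s : Y × Z,
      prob μ (fun ω : A × B × C × X × Y × Z => (ω.2.2.2.2.1, ω.2.2.2.2.2) = s)
        = w * (Fintype.card X : ℝ) := by
    rintro ⟨y0, z0⟩
    rw [prob, Finset.sum_filter]
    simp [Fintype.sum_prod_type, Prod.mk.injEq, hμ, ite_and]
    simp_rw [← Finset.mul_sum]
    rw [← sumrot4 (fun x a b c => p a b c x y0 z0)]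
    simp [hnorm]
  have P3 : ∀ s : (B × C) × (Y × Z),
      prob μ (fun ω : A × B × C × X × Y × Z =>
          ((ω.2.1, ω.2.2.1), (ω.2.2.2.2.1, ω.2.2.2.2.2)) = s)
        = w * ∑ x, ∑ a, p a s.1.1 s.1.2 x s.2.1 s.2.2 := by
    rintro ⟨⟨b0, c0⟩, ⟨y0, z0⟩⟩
    rw [prob, Finset.sum_filter]
    simp [Fintype.sum_prod_type, Prod.mk.injEq, hμ, ite_and]
    simp_rw [← Finset.mul_sum]
    congr 1
    exact Finset.sum_comm
  have P4 : ∀ s : (X × (B × C)) × (Y × Z),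
      prob μ (fun ω : A × B × C × X × Y × Z =>
          ((ω.2.2.2.1, (ω.2.1, ω.2.2.1)), (ω.2.2.2.2.1, ω.2.2.2.2.2)) = s)
        = w * ∑ a, p a s.1.2.1 s.1.2.2 s.1.1 s.2.1 s.2.2 := by
    rintro ⟨⟨x0, b0, c0⟩, ⟨y0, z0⟩⟩
    rw [prob, Finset.sum_filter]
    simp [Fintype.sum_prod_type, Prod.mk.injEq, hμ, ite_and]
    simp_rw [← Finset.mul_sum]
  -- entropy values
  have HE1 : entropy μ
      (fun ω : A × B × C × X × Y × Z => (ω.2.2.2.1, (ω.2.2.2.2.1, ω.2.2.2.2.2)))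
      = - Real.logb 2 w := by
    rw [entropy]
    simp only [P1]
    rw [Finset.sum_const, Finset.card_univ, nsmul_eq_mul]
    simp only [Fintype.card_prod]
    push_cast
    linear_combination (-(Real.logb 2 w)) * hcard1
  have HE2 : entropy μ
      (fun ω : A × B × C × X × Y × Z => (ω.2.2.2.2.1, ω.2.2.2.2.2))
      = - Real.logb 2 (w * (Fintype.card X : ℝ)) := by
    rw [entropy]
    simp only [P2]
    rw [Finset.sum_const, Finset.card_univ, nsmul_eq_mul]
    simp only [Fintype.card_prod]
    push_cast
    linear_combination (-(Real.logb 2 (w * (Fintype.card X : ℝ)))) * hcard1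
  have HE3 : entropy μ
      (fun ω : A × B × C × X × Y × Z => ((ω.2.1, ω.2.2.1), (ω.2.2.2.2.1, ω.2.2.2.2.2)))
      = - ∑ b, ∑ c, ∑ y, ∑ z, (w * ∑ x, ∑ a, p a b c x y z)
          * Real.logb 2 (w * ∑ x, ∑ a, p a b c x y z) := by
    rw [entropy]
    simp only [P3]
    rw [Fintype.sum_prod_type]
    simp [Fintype.sum_prod_type]
  have HE4 : entropy μ
      (fun ω : A × B × C × X × Y × Z =>
        ((ω.2.2.2.1, (ω.2.1, ω.2.2.1)), (ω.2.2.2.2.1, ω.2.2.2.2.2)))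
      = - ∑ x, ∑ b, ∑ c, ∑ y, ∑ z, (w * ∑ a, p a b c x y z)
          * Real.logb 2 (w * ∑ a, p a b c x y z) := by
    rw [entropy]
    simp only [P4]
    rw [Fintype.sum_prod_type]
    simp [Fintype.sum_prod_type]
  -- normalization facts
  have hq1 : ∀ x y z, ∑ b, ∑ c, ∑ a, p a b c x y z = 1 := fun x y z =>
    (sumrot3 (fun a b c => p a b c x y z)).symm.trans (hnorm x y z)
  have hbcyz : ∀ x : X, ∑ b, ∑ c, ∑ y, ∑ z, (∑ a, p a b c x y z)
      = (Fintype.card Y : ℝ) * (Fintype.card Z : ℝ) := by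
    intro x
    rw [sumrot4 (fun b c y z => ∑ a, p a b c x y z),
      sumrot4 (fun c y z b => ∑ a, p a b c x y z)]
    simp only [hq1]
    simp [Finset.sum_const, Finset.card_univ, nsmul_eq_mul]
  have htot : ∑ x, ∑ b, ∑ c, ∑ y, ∑ z, (w * ∑ a, p a b c x y z) = 1 := by
    have hx : ∀ x : X, ∑ b, ∑ c, ∑ y, ∑ z, (w * ∑ a, p a b c x y z)
        = w * ((Fintype.card Y : ℝ) * (Fintype.card Z : ℝ)) := by
      intro x
      simp_rw [← Finset.mul_sum]
      rw [hbcyz x, ← mul_assoc]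
    simp only [hx]
    rw [Finset.sum_const, Finset.card_univ, nsmul_eq_mul]
    linear_combination hcard1
  have hS4 : ∑ b, ∑ c, ∑ y, ∑ z, (w * ∑ x, ∑ a, p a b c x y z) = 1 := by
    simp_rw [← Finset.mul_sum]
    rw [← sumrot5 (fun x b c y z => ∑ a, p a b c x y z)]
    simp only [hbcyz]
    rw [Finset.sum_const, Finset.card_univ, nsmul_eq_mul]
    linear_combination hcard1
  have hvtot : ∑ x : X, ∑ b, ∑ c, ∑ y, ∑ z,
      (w * (∑ x', ∑ a, p a b c x' y z) / (Fintype.card X : ℝ)) = 1 := by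
    rw [Finset.sum_const, Finset.card_univ, nsmul_eq_mul]
    simp_rw [div_eq_mul_inv, ← Finset.sum_mul]
    rw [hS4, one_mul, mul_inv_cancel₀ (ne_of_gt hXpos)]
  -- termwise decomposition of the KL integrand
  have hterm : ∀ (x : X) (b : B) (c : C) (y : Y) (z : Z),
      (w * ∑ a, p a b c x y z) * Real.logb 2 ((w * ∑ a, p a b c x y z) /
          (w * (∑ x', ∑ a, p a b c x' y z) / (Fintype.card X : ℝ)))
        = (w * ∑ a, p a b c x y z) * Real.logb 2 (w * ∑ a, p a b c x y z)
          - (w * ∑ a, p a b c x y z) * Real.logb 2 (w * ∑ x', ∑ a, p a b c x' y z)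
          + (w * ∑ a, p a b c x y z) * Real.logb 2 (Fintype.card X : ℝ) := by
    intro x b c y z
    rcases eq_or_lt_of_le (Finset.sum_nonneg fun a _ => hnn a b c x y z) with h0 | h0
    · rw [← h0]
      simp
    · have hS : 0 < ∑ x', ∑ a, p a b c x' y z :=
        lt_of_lt_of_le h0 (Finset.single_le_sum (f := fun x' => ∑ a, p a b c x' y z)
          (fun i _ => Finset.sum_nonneg fun a _ => hnn a b c i y z) (Finset.mem_univ x))
      have h1 : (w * ∑ a, p a b c x y z) ≠ 0 := ne_of_gt (mul_pos hwpos h0)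
      have h2 : (w * ∑ x', ∑ a, p a b c x' y z) ≠ 0 := ne_of_gt (mul_pos hwpos hS)
      have h3 : ((Fintype.card X : ℝ)) ≠ 0 := ne_of_gt hXpos
      have h4 : (w * (∑ x', ∑ a, p a b c x' y z) / (Fintype.card X : ℝ)) ≠ 0 :=
        div_ne_zero h2 h3
      rw [Real.logb_div h1 h4, Real.logb_div h2 h3]
      ring
  -- collapsing the middle term
  have hp2 : ∑ x, ∑ b, ∑ c, ∑ y, ∑ z,
      (w * ∑ a, p a b c x y z) * Real.logb 2 (w * ∑ x', ∑ a, p a b c x' y z)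
      = ∑ b, ∑ c, ∑ y, ∑ z,
        (w * ∑ x', ∑ a, p a b c x' y z) * Real.logb 2 (w * ∑ x', ∑ a, p a b c x' y z) := by
    rw [sumrot5 (fun x b c y z =>
      (w * ∑ a, p a b c x y z) * Real.logb 2 (w * ∑ x', ∑ a, p a b c x' y z))]
    refine Finset.sum_congr rfl fun b _ => Finset.sum_congr rfl fun c _ =>
      Finset.sum_congr rfl fun y _ => Finset.sum_congr rfl fun z _ => ?_
    rw [← Finset.sum_mul, ← Finset.mul_sum]
  have hp3 : ∑ x, ∑ b, ∑ c, ∑ y, ∑ z,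
      (w * ∑ a, p a b c x y z) * Real.logb 2 (Fintype.card X : ℝ)
      = Real.logb 2 (Fintype.card X : ℝ) := by
    simp_rw [← Finset.sum_mul]
    rw [htot, one_mul]
  -- the key identity: CMI equals a relative entropy
  have key : condMutualInfo μ
        (fun ω : A × B × C × X × Y × Z => ω.2.2.2.1)
        (fun ω => (ω.2.1, ω.2.2.1))
        (fun ω => (ω.2.2.2.2.1, ω.2.2.2.2.2))
      = ∑ x, ∑ b, ∑ c, ∑ y, ∑ z,
          (w * ∑ a, p a b c x y z) * Real.logb 2 ((w * ∑ a, p a b c x y z) /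
            (w * (∑ x', ∑ a, p a b c x' y z) / (Fintype.card X : ℝ))) := by
    simp only [condMutualInfo, condEntropy]
    rw [HE1, HE2, HE3, HE4]
    simp only [hterm]
    simp_rw [Finset.sum_add_distrib, Finset.sum_sub_distrib]
    rw [hp2, hp3]
    rw [Real.logb_mul (ne_of_gt hwpos) (ne_of_gt hXpos)]
    ring
  -- Gibbs' inequality data
  have hu : ∀ i : X × B × C × Y × Z,
      0 ≤ w * ∑ a, p a i.2.1 i.2.2.1 i.1 i.2.2.2.1 i.2.2.2.2 :=
    fun i => mul_nonneg hwpos.le (Finset.sum_nonneg fun a _ => hnn _ _ _ _ _ _)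
  have hv : ∀ i : X × B × C × Y × Z,
      0 ≤ w * (∑ x', ∑ a, p a i.2.1 i.2.2.1 x' i.2.2.2.1 i.2.2.2.2) / (Fintype.card X : ℝ) :=
    fun i => div_nonneg (mul_nonneg hwpos.le (Finset.sum_nonneg fun x' _ =>
      Finset.sum_nonneg fun a _ => hnn _ _ _ _ _ _)) hXpos.le
  have hav : ∀ i : X × B × C × Y × Z,
      w * (∑ x', ∑ a, p a i.2.1 i.2.2.1 x' i.2.2.2.1 i.2.2.2.2) / (Fintype.card X : ℝ) = 0 →
      w * ∑ a, p a i.2.1 i.2.2.1 i.1 i.2.2.2.1 i.2.2.2.2 = 0 := by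
    rintro ⟨x, b, c, y, z⟩ h
    dsimp only at h ⊢
    have hS0 : ∑ x', ∑ a, p a b c x' y z = 0 := by
      rcases div_eq_zero_iff.mp h with h' | h'
      · rcases mul_eq_zero.mp h' with h'' | h''
        · exact absurd h'' (ne_of_gt hwpos)
        · exact h''
      · exact absurd h' (ne_of_gt hXpos)
    have hq0 : ∑ a, p a b c x y z = 0 :=
      (Finset.sum_eq_zero_iff_of_nonneg fun x' _ =>
        Finset.sum_nonneg fun a _ => hnn a b c x' y z).mp hS0 x (Finset.mem_univ x)
    rw [hq0, mul_zero]
  have husum : ∑ i : X × B × C × Y × Z,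
        (w * ∑ a, p a i.2.1 i.2.2.1 i.1 i.2.2.2.1 i.2.2.2.2)
      = ∑ i : X × B × C × Y × Z,
        (w * (∑ x', ∑ a, p a i.2.1 i.2.2.1 x' i.2.2.2.1 i.2.2.2.2) / (Fintype.card X : ℝ)) := by
    have h1 : ∑ i : X × B × C × Y × Z,
        (w * ∑ a, p a i.2.1 i.2.2.1 i.1 i.2.2.2.1 i.2.2.2.2) = 1 := by
      simp only [Fintype.sum_prod_type]
      exact htot
    have h2 : ∑ i : X × B × C × Y × Z,
        (w * (∑ x', ∑ a, p a i.2.1 i.2.2.1 x' i.2.2.2.1 i.2.2.2.2) / (Fintype.card X : ℝ))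
        = 1 := by
      simp only [Fintype.sum_prod_type]
      exact hvtot
    rw [h1, h2]
  have hiff := gibbs
    (fun i : X × B × C × Y × Z => w * ∑ a, p a i.2.1 i.2.2.1 i.1 i.2.2.2.1 i.2.2.2.2)
    (fun i : X × B × C × Y × Z =>
      w * (∑ x', ∑ a, p a i.2.1 i.2.2.1 x' i.2.2.2.1 i.2.2.2.2) / (Fintype.card X : ℝ))
    hu hv hav husum
  simp only [Fintype.sum_prod_type] at hiff
  rw [key, hiff]
  -- the combinatorial equivalence
  constructor
  · intro h x x' b c y z
    have h1 := h (x, b, c, y, z)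
    have h2 := h (x', b, c, y, z)
    dsimp only at h1 h2
    exact mul_left_cancel₀ (ne_of_gt hwpos) (h1.trans h2.symm)
  · rintro h ⟨x, b, c, y, z⟩
    dsimp only
    have hSx : ∑ x', ∑ a, p a b c x' y z = (Fintype.card X : ℝ) * ∑ a, p a b c x y z := by
      calc ∑ x', ∑ a, p a b c x' y z = ∑ _x' : X, ∑ a, p a b c x y z :=
            Finset.sum_congr rfl fun x' _ => h x' x b c y z
        _ = (Fintype.card X : ℝ) * ∑ a, p a b c x y z := by
            rw [Finset.sum_const, Finset.card_univ, nsmul_eq_mul]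
    rw [hSx]
    field_simp
end

section
/- Let A1, B1, C1, A2, B2, C2, E be random variables on a common finite discrete probability space, each with values in a finite set. Then the conditional total correlation is superadditive across blocks: I((A1,A2);(B1,B2);(C1,C2)|E) ≥ I(A1;B1;C1|(E,A2,B2,C2)) + I(A2;B2;C2|E). -/
section helpers
variable {Ω : Type*} [Fintype Ω] (μ : Ω → ℝ)

lemma prob_congr' {P Q : Ω → Prop} [DecidablePred P] [DecidablePred Q]
    (h : ∀ ω, P ω ↔ Q ω) : prob μ P = prob μ Q := by
  unfold prob
  congr 1
  exact Finset.filter_congr (fun x _ => h x)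

lemma prob_nonneg' (hμ : ∀ ω, 0 ≤ μ ω) (P : Ω → Prop) [DecidablePred P] : 0 ≤ prob μ P :=
  Finset.sum_nonneg fun ω _ => hμ ω

lemma prob_mono' (hμ : ∀ ω, 0 ≤ μ ω) {P Q : Ω → Prop} [DecidablePred P] [DecidablePred Q]
    (h : ∀ ω, P ω → Q ω) : prob μ P ≤ prob μ Q := by
  apply Finset.sum_le_sum_of_subset_of_nonneg
  · intro ω hω
    simp only [Finset.mem_filter] at *
    exact ⟨hω.1, h ω hω.2⟩
  · intro ω _ _
    exact hμ ω

lemma prob_true' (hμ1 : ∑ ω, μ ω = 1) : prob μ (fun _ => True) = 1 := by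
  simpa [prob] using hμ1

lemma prob_sum_fiber' {S : Type*} [Fintype S] [DecidableEq S]
    (P : Ω → Prop) [DecidablePred P] (Y : Ω → S) :
    ∑ s : S, prob μ (fun ω => P ω ∧ Y ω = s) = prob μ P := by
  unfold prob
  simp only [Finset.sum_filter]
  rw [Finset.sum_comm]
  refine Finset.sum_congr rfl fun ω _ => ?_
  by_cases hP : P ω
  · simp [hP]
  · simp [hP]

/-- Entropy is invariant under injective relabeling of values. -/
lemma entropy_comp' {S T : Type*} [Fintype S] [DecidableEq S] [Fintype T] [DecidableEq T]
    (e : S → T) (he : Function.Injective e) (X : Ω → S) :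
    entropy μ (fun ω => e (X ω)) = entropy μ X := by
  unfold entropy
  congr 1
  have hvan : ∀ t ∈ Finset.univ, t ∉ Finset.image e Finset.univ →
      prob μ (fun ω => e (X ω) = t) * Real.logb 2 (prob μ (fun ω => e (X ω) = t)) = 0 := by
    intro t _ ht
    have : prob μ (fun ω => e (X ω) = t) = 0 := by
      unfold prob
      rw [Finset.filter_eq_empty_iff.mpr, Finset.sum_empty]
      intro ω _ h
      exact ht (Finset.mem_image.mpr ⟨X ω, Finset.mem_univ _, h⟩)
    rw [this, zero_mul]
  rw [← Finset.sum_subset (Finset.subset_univ (Finset.image e Finset.univ)) hvan,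
    Finset.sum_image (fun a _ b _ h => he h)]
  refine Finset.sum_congr rfl fun s _ => ?_
  have : prob μ (fun ω => e (X ω) = e s) = prob μ (fun ω => X ω = s) :=
    prob_congr' μ fun ω => by simp [he.eq_iff]
  rw [this]

end helpers


/-- Entropy invariance, left-inverse form. -/
lemma entropy_comp_eq {Ω : Type*} [Fintype Ω] (μ : Ω → ℝ) {S T : Type*}
    [Fintype S] [DecidableEq S] [Fintype T] [DecidableEq T]
    (e : S → T) (g : T → S) (hg : ∀ s, g (e s) = s) (X : Ω → S) :
    entropy μ (fun ω => e (X ω)) = entropy μ X :=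
  entropy_comp' μ e (Function.LeftInverse.injective hg) X

lemma sum3_comm {α β γ : Type*} [Fintype α] [Fintype β] [Fintype γ] (f : α → β → γ → ℝ) :
    ∑ x : α, ∑ y : β, ∑ z : γ, f x y z = ∑ z : γ, ∑ x : α, ∑ y : β, f x y z :=
  calc ∑ x : α, ∑ y : β, ∑ z : γ, f x y z
      = ∑ x : α, ∑ z : γ, ∑ y : β, f x y z :=
        Finset.sum_congr rfl fun _ _ => Finset.sum_comm
    _ = ∑ z : γ, ∑ x : α, ∑ y : β, f x y z := Finset.sum_comm

/-- The Gibbs-inequality core of strong subadditivity. -/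
lemma gibbs_sum {SX SY SZ : Type*} [Fintype SX] [Fintype SY] [Fintype SZ]
    (p3 : SX → SY → SZ → ℝ) (pXZ : SX → SZ → ℝ) (pYZ : SY → SZ → ℝ) (pZ : SZ → ℝ)
    (h3 : ∀ x y z, 0 ≤ p3 x y z)
    (hXZ0 : ∀ x z, 0 ≤ pXZ x z) (hYZ0 : ∀ y z, 0 ≤ pYZ y z) (hZ0 : ∀ z, 0 ≤ pZ z)
    (hle1 : ∀ x y z, p3 x y z ≤ pXZ x z) (hle2 : ∀ x y z, p3 x y z ≤ pYZ y z)
    (hle3 : ∀ x y z, p3 x y z ≤ pZ z)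
    (hmX : ∀ z, ∑ x, pXZ x z = pZ z) (hmY : ∀ z, ∑ y, pYZ y z = pZ z)
    (hmP : ∀ x z, ∑ y, p3 x y z = pXZ x z)
    (h1 : ∑ z, ∑ x, ∑ y, p3 x y z = 1) :
    ∑ z, ∑ x, ∑ y, p3 x y z * (Real.logb 2 (pXZ x z) + Real.logb 2 (pYZ y z)
      - Real.logb 2 (p3 x y z) - Real.logb 2 (pZ z)) ≤ 0 := by
  set c : ℝ := (Real.log 2)⁻¹ with hc
  have hcpos : 0 < c := inv_pos.mpr (Real.log_pos one_lt_two)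
  set g : SX → SY → SZ → ℝ :=
    fun x y z => if 0 < p3 x y z then pXZ x z * pYZ y z / pZ z else 0 with hg
  have hterm : ∀ z x y, p3 x y z * (Real.logb 2 (pXZ x z) + Real.logb 2 (pYZ y z)
      - Real.logb 2 (p3 x y z) - Real.logb 2 (pZ z)) ≤ (g x y z - p3 x y z) * c := by
    intro z x y
    by_cases h : 0 < p3 x y z
    · have hxz : 0 < pXZ x z := lt_of_lt_of_le h (hle1 x y z)
      have hyz : 0 < pYZ y z := lt_of_lt_of_le h (hle2 x y z)
      have hz : 0 < pZ z := lt_of_lt_of_le h (hle3 x y z)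
      have e1 : Real.logb 2 (pXZ x z) + Real.logb 2 (pYZ y z) - Real.logb 2 (p3 x y z)
          - Real.logb 2 (pZ z)
          = Real.log (pXZ x z * pYZ y z / (p3 x y z * pZ z)) * c := by
        rw [Real.log_div (by positivity) (by positivity), Real.log_mul hxz.ne' hyz.ne',
          Real.log_mul h.ne' hz.ne']
        simp only [Real.logb, hc, div_eq_mul_inv]
        ring
      have hr : 0 < pXZ x z * pYZ y z / (p3 x y z * pZ z) := by positivity
      have hlog := Real.log_le_sub_one_of_pos hr
      have e2 : p3 x y z * (pXZ x z * pYZ y z / (p3 x y z * pZ z) - 1)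
          = pXZ x z * pYZ y z / pZ z - p3 x y z := by
        field_simp
      have hmain : p3 x y z * Real.log (pXZ x z * pYZ y z / (p3 x y z * pZ z))
          ≤ pXZ x z * pYZ y z / pZ z - p3 x y z := by
        calc p3 x y z * Real.log (pXZ x z * pYZ y z / (p3 x y z * pZ z))
            ≤ p3 x y z * (pXZ x z * pYZ y z / (p3 x y z * pZ z) - 1) :=
              mul_le_mul_of_nonneg_left hlog h.le
          _ = _ := e2
      rw [e1]
      have hgval : g x y z = pXZ x z * pYZ y z / pZ z := by rw [hg]; simp [h]
      rw [hgval]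
      calc p3 x y z * (Real.log (pXZ x z * pYZ y z / (p3 x y z * pZ z)) * c)
          = (p3 x y z * Real.log (pXZ x z * pYZ y z / (p3 x y z * pZ z))) * c := by ring
        _ ≤ (pXZ x z * pYZ y z / pZ z - p3 x y z) * c :=
            mul_le_mul_of_nonneg_right hmain hcpos.le
    · have h0 : p3 x y z = 0 := le_antisymm (not_lt.mp h) (h3 x y z)
      have hgval : g x y z = 0 := by rw [hg]; simp [h]
      rw [h0, hgval]
      simp
  have hgsum : ∀ z, ∑ x, ∑ y, g x y z ≤ pZ z := by
    intro z
    by_cases hz : 0 < pZ z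
    · have step : ∀ x, ∑ y, g x y z ≤ pXZ x z := by
        intro x
        have hsum : ∑ y, pXZ x z * pYZ y z / pZ z = pXZ x z := by
          rw [← Finset.sum_div, ← Finset.mul_sum, hmY z, mul_div_assoc, div_self hz.ne', mul_one]
        rw [← hsum]
        refine Finset.sum_le_sum fun y _ => ?_
        by_cases h : 0 < p3 x y z
        · rw [hg]; simp [h]
        · rw [hg]
          simp only [if_neg h]
          have := hXZ0 x z
          have := hYZ0 y z
          positivity
      calc ∑ x, ∑ y, g x y z ≤ ∑ x, pXZ x z := Finset.sum_le_sum fun x _ => step x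
        _ = pZ z := hmX z
    · have hz0 : pZ z = 0 := le_antisymm (not_lt.mp hz) (hZ0 z)
      have hg0 : ∀ x y, g x y z = 0 := by
        intro x y
        have hnot : ¬ 0 < p3 x y z := fun hlt => hz (lt_of_lt_of_le hlt (hle3 x y z))
        rw [hg]; simp [hnot]
      simp [hg0, hz0]
  have hgtot : ∑ z, ∑ x, ∑ y, g x y z ≤ 1 := by
    calc ∑ z, ∑ x, ∑ y, g x y z ≤ ∑ z, pZ z := Finset.sum_le_sum fun z _ => hgsum z
      _ = 1 := by
        rw [← h1]
        refine Finset.sum_congr rfl fun z _ => ?_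
        rw [← hmX z]
        exact Finset.sum_congr rfl fun x _ => (hmP x z).symm
  calc ∑ z, ∑ x, ∑ y, p3 x y z * (Real.logb 2 (pXZ x z) + Real.logb 2 (pYZ y z)
        - Real.logb 2 (p3 x y z) - Real.logb 2 (pZ z))
      ≤ ∑ z, ∑ x, ∑ y, (g x y z - p3 x y z) * c := by
        refine Finset.sum_le_sum fun z _ => Finset.sum_le_sum fun x _ =>
          Finset.sum_le_sum fun y _ => hterm z x y
    _ = (∑ z, ∑ x, ∑ y, g x y z) * c - (∑ z, ∑ x, ∑ y, p3 x y z) * c := by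
        simp only [sub_mul, Finset.sum_sub_distrib, Finset.sum_mul]
    _ ≤ 0 := by
        rw [h1]
        nlinarith [mul_nonneg (sub_nonneg.mpr hgtot) hcpos.le]

/-- Strong subadditivity / nonnegativity of conditional mutual information:
`H(X,Y,Z) + H(Z) ≤ H(X,Z) + H(Y,Z)`. -/
lemma submodular' {Ω SX SY SZ : Type*} [Fintype Ω] [Fintype SX] [DecidableEq SX]
    [Fintype SY] [DecidableEq SY] [Fintype SZ] [DecidableEq SZ]
    (μ : Ω → ℝ) (hμ : ∀ ω, 0 ≤ μ ω) (hμ1 : ∑ ω, μ ω = 1)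
    (X : Ω → SX) (Y : Ω → SY) (Z : Ω → SZ) :
    entropy μ (fun ω => (X ω, (Y ω, Z ω))) + entropy μ Z
      ≤ entropy μ (fun ω => (X ω, Z ω)) + entropy μ (fun ω => (Y ω, Z ω)) := by
  set p3 : SX → SY → SZ → ℝ :=
    fun x y z => prob μ (fun ω => X ω = x ∧ Y ω = y ∧ Z ω = z) with hp3
  set pXZ : SX → SZ → ℝ := fun x z => prob μ (fun ω => X ω = x ∧ Z ω = z) with hpXZ
  set pYZ : SY → SZ → ℝ := fun y z => prob μ (fun ω => Y ω = y ∧ Z ω = z) with hpYZ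
  set pZ : SZ → ℝ := fun z => prob μ (fun ω => Z ω = z) with hpZ
  have hmP : ∀ x z, ∑ y, p3 x y z = pXZ x z := by
    intro x z
    calc ∑ y, p3 x y z
        = ∑ y, prob μ (fun ω => (X ω = x ∧ Z ω = z) ∧ Y ω = y) :=
          Finset.sum_congr rfl fun y _ => prob_congr' μ (fun ω => by tauto)
      _ = pXZ x z := prob_sum_fiber' μ _ Y
  have hmQ : ∀ y z, ∑ x, p3 x y z = pYZ y z := by
    intro y z
    calc ∑ x, p3 x y z
        = ∑ x, prob μ (fun ω => (Y ω = y ∧ Z ω = z) ∧ X ω = x) :=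
          Finset.sum_congr rfl fun x _ => prob_congr' μ (fun ω => by tauto)
      _ = pYZ y z := prob_sum_fiber' μ _ X
  have hmX : ∀ z, ∑ x, pXZ x z = pZ z := by
    intro z
    calc ∑ x, pXZ x z
        = ∑ x, prob μ (fun ω => Z ω = z ∧ X ω = x) :=
          Finset.sum_congr rfl fun x _ => prob_congr' μ (fun ω => by tauto)
      _ = pZ z := prob_sum_fiber' μ _ X
  have hmY : ∀ z, ∑ y, pYZ y z = pZ z := by
    intro z
    calc ∑ y, pYZ y z
        = ∑ y, prob μ (fun ω => Z ω = z ∧ Y ω = y) :=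
          Finset.sum_congr rfl fun y _ => prob_congr' μ (fun ω => by tauto)
      _ = pZ z := prob_sum_fiber' μ _ Y
  have hZ1 : ∑ z, pZ z = 1 := by
    calc ∑ z, pZ z
        = ∑ z, prob μ (fun ω => True ∧ Z ω = z) :=
          Finset.sum_congr rfl fun z _ => prob_congr' μ (fun ω => by tauto)
      _ = prob μ (fun _ => True) := prob_sum_fiber' μ _ Z
      _ = 1 := prob_true' μ hμ1
  have h1 : ∑ z, ∑ x, ∑ y, p3 x y z = 1 := by
    rw [← hZ1]
    refine Finset.sum_congr rfl fun z _ => ?_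
    rw [← hmX z]
    exact Finset.sum_congr rfl fun x _ => hmP x z
  have eXYZ : entropy μ (fun ω => (X ω, (Y ω, Z ω)))
      = -∑ z, ∑ x, ∑ y, p3 x y z * Real.logb 2 (p3 x y z) := by
    simp only [entropy, Fintype.sum_prod_type]
    congr 1
    rw [← sum3_comm (fun x y z => p3 x y z * Real.logb 2 (p3 x y z))]
    refine Finset.sum_congr rfl fun x _ => Finset.sum_congr rfl fun y _ =>
      Finset.sum_congr rfl fun z _ => ?_
    have : prob μ (fun ω => (X ω, Y ω, Z ω) = (x, y, z)) = p3 x y z :=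
      prob_congr' μ fun ω => by simp [Prod.ext_iff]
    rw [this]
  have eXZ : entropy μ (fun ω => (X ω, Z ω))
      = -∑ z, ∑ x, ∑ y, p3 x y z * Real.logb 2 (pXZ x z) := by
    simp only [entropy, Fintype.sum_prod_type]
    congr 1
    rw [Finset.sum_comm]
    refine Finset.sum_congr rfl fun z _ => Finset.sum_congr rfl fun x _ => ?_
    have : prob μ (fun ω => (X ω, Z ω) = (x, z)) = pXZ x z :=
      prob_congr' μ fun ω => by simp [Prod.ext_iff]
    rw [this, ← hmP x z, Finset.sum_mul]
  have eYZ : entropy μ (fun ω => (Y ω, Z ω))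
      = -∑ z, ∑ x, ∑ y, p3 x y z * Real.logb 2 (pYZ y z) := by
    simp only [entropy, Fintype.sum_prod_type]
    congr 1
    rw [Finset.sum_comm]
    refine Finset.sum_congr rfl fun z _ => ?_
    rw [Finset.sum_comm]
    refine Finset.sum_congr rfl fun y _ => ?_
    have : prob μ (fun ω => (Y ω, Z ω) = (y, z)) = pYZ y z :=
      prob_congr' μ fun ω => by simp [Prod.ext_iff]
    rw [this, ← hmQ y z, Finset.sum_mul]
  have eZ : entropy μ Z = -∑ z, ∑ x, ∑ y, p3 x y z * Real.logb 2 (pZ z) := by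
    simp only [entropy]
    congr 1
    refine Finset.sum_congr rfl fun z _ => ?_
    rw [show prob μ (fun ω => Z ω = z) = pZ z from rfl, ← hmX z, Finset.sum_mul]
    refine Finset.sum_congr rfl fun x _ => ?_
    rw [← hmP x z, Finset.sum_mul]
  have key := gibbs_sum p3 pXZ pYZ pZ
    (fun x y z => prob_nonneg' μ hμ _)
    (fun x z => prob_nonneg' μ hμ _) (fun y z => prob_nonneg' μ hμ _)
    (fun z => prob_nonneg' μ hμ _)
    (fun x y z => prob_mono' μ hμ fun ω h => ⟨h.1, h.2.2⟩)
    (fun x y z => prob_mono' μ hμ fun ω h => ⟨h.2.1, h.2.2⟩)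
    (fun x y z => prob_mono' μ hμ fun ω h => h.2.2)
    hmX hmY hmP h1
  simp only [mul_add, mul_sub, Finset.sum_add_distrib, Finset.sum_sub_distrib] at key
  rw [eXYZ, eXZ, eYZ, eZ]
  linarith [key]

/-- Superadditivity of the tripartite conditional total correlation across blocks:
`I(A₁A₂;B₁B₂;C₁C₂|E) ≥ I(A₁;B₁;C₁|EA₂B₂C₂) + I(A₂;B₂;C₂|E)`. -/
theorem tripartite_total_correlation_superadditive
    {Ω SA1 SB1 SC1 SA2 SB2 SC2 SE : Type*} [Fintype Ω]
    [Fintype SA1] [DecidableEq SA1] [Fintype SB1] [DecidableEq SB1]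
    [Fintype SC1] [DecidableEq SC1] [Fintype SA2] [DecidableEq SA2]
    [Fintype SB2] [DecidableEq SB2] [Fintype SC2] [DecidableEq SC2]
    [Fintype SE] [DecidableEq SE]
    (μ : Ω → ℝ) (hμ : ∀ ω, 0 ≤ μ ω) (hμ1 : ∑ ω, μ ω = 1)
    (A1 : Ω → SA1) (B1 : Ω → SB1) (C1 : Ω → SC1)
    (A2 : Ω → SA2) (B2 : Ω → SB2) (C2 : Ω → SC2) (E : Ω → SE) :
    condTotalCorr3 μ A1 B1 C1 (fun ω => (E ω, A2 ω, B2 ω, C2 ω))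
        + condTotalCorr3 μ A2 B2 C2 E
      ≤ condTotalCorr3 μ (fun ω => (A1 ω, A2 ω)) (fun ω => (B1 ω, B2 ω))
          (fun ω => (C1 ω, C2 ω)) E := by
  -- submodularity instances
  have sub_A : entropy μ (fun ω => (A1 ω, ((B2 ω, C2 ω), (A2 ω, E ω))))
      + entropy μ (fun ω => (A2 ω, E ω))
      ≤ entropy μ (fun ω => (A1 ω, (A2 ω, E ω)))
      + entropy μ (fun ω => ((B2 ω, C2 ω), (A2 ω, E ω))) :=
    submodular' μ hμ hμ1 A1 (fun ω => (B2 ω, C2 ω)) (fun ω => (A2 ω, E ω))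
  have sub_B : entropy μ (fun ω => (B1 ω, ((A2 ω, C2 ω), (B2 ω, E ω))))
      + entropy μ (fun ω => (B2 ω, E ω))
      ≤ entropy μ (fun ω => (B1 ω, (B2 ω, E ω)))
      + entropy μ (fun ω => ((A2 ω, C2 ω), (B2 ω, E ω))) :=
    submodular' μ hμ hμ1 B1 (fun ω => (A2 ω, C2 ω)) (fun ω => (B2 ω, E ω))
  have sub_C : entropy μ (fun ω => (C1 ω, ((A2 ω, B2 ω), (C2 ω, E ω))))
      + entropy μ (fun ω => (C2 ω, E ω))
      ≤ entropy μ (fun ω => (C1 ω, (C2 ω, E ω)))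
      + entropy μ (fun ω => ((A2 ω, B2 ω), (C2 ω, E ω))) :=
    submodular' μ hμ hμ1 C1 (fun ω => (A2 ω, B2 ω)) (fun ω => (C2 ω, E ω))
  -- relabeling identities
  have rA1 : entropy μ (fun ω => (A1 ω, ((B2 ω, C2 ω), (A2 ω, E ω))))
      = entropy μ (fun ω => (A1 ω, (E ω, A2 ω, B2 ω, C2 ω))) :=
    entropy_comp_eq μ
      (fun (p : SA1 × SE × SA2 × SB2 × SC2) =>
        (p.1, ((p.2.2.2.1, p.2.2.2.2), (p.2.2.1, p.2.1))))
      (fun (q : SA1 × (SB2 × SC2) × SA2 × SE) =>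
        (q.1, (q.2.2.2, (q.2.2.1, (q.2.1.1, q.2.1.2))))) (fun p => rfl)
      (fun ω => (A1 ω, (E ω, A2 ω, B2 ω, C2 ω)))
  have rA2 : entropy μ (fun ω => ((B2 ω, C2 ω), (A2 ω, E ω)))
      = entropy μ (fun ω => (E ω, A2 ω, B2 ω, C2 ω)) :=
    entropy_comp_eq μ
      (fun (p : SE × SA2 × SB2 × SC2) => ((p.2.2.1, p.2.2.2), (p.2.1, p.1)))
      (fun (q : (SB2 × SC2) × SA2 × SE) => (q.2.2, (q.2.1, (q.1.1, q.1.2)))) (fun p => rfl)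
      (fun ω => (E ω, A2 ω, B2 ω, C2 ω))
  have rA3 : entropy μ (fun ω => ((A1 ω, A2 ω), E ω))
      = entropy μ (fun ω => (A1 ω, (A2 ω, E ω))) :=
    entropy_comp_eq μ
      (fun (p : SA1 × SA2 × SE) => ((p.1, p.2.1), p.2.2))
      (fun (q : (SA1 × SA2) × SE) => (q.1.1, (q.1.2, q.2))) (fun p => rfl)
      (fun ω => (A1 ω, (A2 ω, E ω)))
  have rB1 : entropy μ (fun ω => (B1 ω, ((A2 ω, C2 ω), (B2 ω, E ω))))
      = entropy μ (fun ω => (B1 ω, (E ω, A2 ω, B2 ω, C2 ω))) :=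
    entropy_comp_eq μ
      (fun (p : SB1 × SE × SA2 × SB2 × SC2) =>
        (p.1, ((p.2.2.1, p.2.2.2.2), (p.2.2.2.1, p.2.1))))
      (fun (q : SB1 × (SA2 × SC2) × SB2 × SE) =>
        (q.1, (q.2.2.2, (q.2.1.1, (q.2.2.1, q.2.1.2))))) (fun p => rfl)
      (fun ω => (B1 ω, (E ω, A2 ω, B2 ω, C2 ω)))
  have rB2 : entropy μ (fun ω => ((A2 ω, C2 ω), (B2 ω, E ω)))
      = entropy μ (fun ω => (E ω, A2 ω, B2 ω, C2 ω)) :=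
    entropy_comp_eq μ
      (fun (p : SE × SA2 × SB2 × SC2) => ((p.2.1, p.2.2.2), (p.2.2.1, p.1)))
      (fun (q : (SA2 × SC2) × SB2 × SE) => (q.2.2, (q.1.1, (q.2.1, q.1.2)))) (fun p => rfl)
      (fun ω => (E ω, A2 ω, B2 ω, C2 ω))
  have rB3 : entropy μ (fun ω => ((B1 ω, B2 ω), E ω))
      = entropy μ (fun ω => (B1 ω, (B2 ω, E ω))) :=
    entropy_comp_eq μ
      (fun (p : SB1 × SB2 × SE) => ((p.1, p.2.1), p.2.2))
      (fun (q : (SB1 × SB2) × SE) => (q.1.1, (q.1.2, q.2))) (fun p => rfl)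
      (fun ω => (B1 ω, (B2 ω, E ω)))
  have rC1 : entropy μ (fun ω => (C1 ω, ((A2 ω, B2 ω), (C2 ω, E ω))))
      = entropy μ (fun ω => (C1 ω, (E ω, A2 ω, B2 ω, C2 ω))) :=
    entropy_comp_eq μ
      (fun (p : SC1 × SE × SA2 × SB2 × SC2) =>
        (p.1, ((p.2.2.1, p.2.2.2.1), (p.2.2.2.2, p.2.1))))
      (fun (q : SC1 × (SA2 × SB2) × SC2 × SE) =>
        (q.1, (q.2.2.2, (q.2.1.1, (q.2.1.2, q.2.2.1))))) (fun p => rfl)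
      (fun ω => (C1 ω, (E ω, A2 ω, B2 ω, C2 ω)))
  have rC2 : entropy μ (fun ω => ((A2 ω, B2 ω), (C2 ω, E ω)))
      = entropy μ (fun ω => (E ω, A2 ω, B2 ω, C2 ω)) :=
    entropy_comp_eq μ
      (fun (p : SE × SA2 × SB2 × SC2) => ((p.2.1, p.2.2.1), (p.2.2.2, p.1)))
      (fun (q : (SA2 × SB2) × SC2 × SE) => (q.2.2, (q.1.1, (q.1.2, q.2.1)))) (fun p => rfl)
      (fun ω => (E ω, A2 ω, B2 ω, C2 ω))
  have rC3 : entropy μ (fun ω => ((C1 ω, C2 ω), E ω))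
      = entropy μ (fun ω => (C1 ω, (C2 ω, E ω))) :=
    entropy_comp_eq μ
      (fun (p : SC1 × SC2 × SE) => ((p.1, p.2.1), p.2.2))
      (fun (q : (SC1 × SC2) × SE) => (q.1.1, (q.1.2, q.2))) (fun p => rfl)
      (fun ω => (C1 ω, (C2 ω, E ω)))
  have r4 : entropy μ (fun ω => ((A2 ω, B2 ω, C2 ω), E ω))
      = entropy μ (fun ω => (E ω, A2 ω, B2 ω, C2 ω)) :=
    entropy_comp_eq μ
      (fun (p : SE × SA2 × SB2 × SC2) => (p.2, p.1))
      (fun (q : (SA2 × SB2 × SC2) × SE) => (q.2, q.1)) (fun p => rfl)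
      (fun ω => (E ω, A2 ω, B2 ω, C2 ω))
  have r5 : entropy μ (fun ω => (((A1 ω, A2 ω), (B1 ω, B2 ω), (C1 ω, C2 ω)), E ω))
      = entropy μ (fun ω => ((A1 ω, B1 ω, C1 ω), (E ω, A2 ω, B2 ω, C2 ω))) :=
    entropy_comp_eq μ
      (fun (p : (SA1 × SB1 × SC1) × SE × SA2 × SB2 × SC2) =>
        (((p.1.1, p.2.2.1), ((p.1.2.1, p.2.2.2.1), (p.1.2.2, p.2.2.2.2))), p.2.1))
      (fun (q : ((SA1 × SA2) × (SB1 × SB2) × SC1 × SC2) × SE) =>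
        ((q.1.1.1, (q.1.2.1.1, q.1.2.2.1)), (q.2, (q.1.1.2, (q.1.2.1.2, q.1.2.2.2)))))
      (fun p => rfl)
      (fun ω => ((A1 ω, B1 ω, C1 ω), (E ω, A2 ω, B2 ω, C2 ω)))
  simp only [condTotalCorr3, condEntropy]
  linarith [sub_A, sub_B, sub_C, rA1, rA2, rA3, rB1, rB2, rB3, rC1, rC2, rC3, r4, r5]
end
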